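/- arXiv:2405.12467 — 5 statements merged into one kernel-verified Lean document; each statement's English description precedes it below -/
import Mathlib

section
/- The standard Gumbel measure μ on ℝ, defined as the measure with density x ↦ exp(−x − exp(−x)) with respect to Lebesgue measure, is a probability measure, and its mean equals the Euler–Mascheroni constant: ∫ x dμ(x) = γ. -/
/-!
The substitution `t = exp (-x)` turns the Gumbel density `exp (-x - exp (-x)) dx` into
`exp (-t) dt` on `(0, ∞)`: the Gumbel law is the image of the standard exponential law under
`t ↦ -log t`. Hence its total mass is `∫₀^∞ exp (-t) dt = 1`, and its mean is
`-∫₀^∞ log t · exp (-t) dt = -Γ'(1) = γ`.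
-/

open MeasureTheory

/-- The standard Gumbel (Type-I extreme value) measure on ℝ: the measure with
density `x ↦ exp (-x - exp (-x))` with respect to Lebesgue measure. -/
noncomputable def gumbelMeasure : Measure ℝ :=
  MeasureTheory.volume.withDensity
    (fun x => ENNReal.ofReal (Real.exp (-x - Real.exp (-x))))

open Set Real

section Substitution

variable {E : Type*} [NormedAddCommGroup E] [NormedSpace ℝ E]

theorem integral_exp_neg_smul_comp_exp_neg (g : ℝ → E) :
    ∫ x, exp (-x) • g (exp (-x)) = ∫ t in Ioi 0, g t := by
  have hderiv : ∀ x ∈ univ, HasDerivWithinAt (fun x ↦ exp (-x)) (-exp (-x)) univ x :=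
    fun x _ ↦ (by simpa using (hasDerivAt_neg x).exp : HasDerivAt _ _ x).hasDerivWithinAt
  have hinj : InjOn (fun x ↦ exp (-x)) univ := fun x _ y _ h ↦ neg_injective (exp_injective h)
  have himage : (fun x ↦ exp (-x)) '' univ = Ioi 0 := by
    rw [image_univ, ← range_exp]
    exact Function.Surjective.range_comp neg_surjective exp
  simpa [himage, abs_of_pos (exp_pos _)] using
    (integral_image_eq_integral_abs_deriv_smul MeasurableSet.univ hderiv hinj g).symm

theorem integral_gumbelMeasure (g : ℝ → E) :
    ∫ x, g x ∂gumbelMeasure = ∫ t in Ioi 0, exp (-t) • g (-log t) := by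
  rw [gumbelMeasure, integral_withDensity_eq_integral_toReal_smul (by fun_prop)
    (ae_of_all _ fun _ ↦ ENNReal.ofReal_lt_top), ← integral_exp_neg_smul_comp_exp_neg]
  congr with x
  rw [ENNReal.toReal_ofReal (exp_pos _).le, log_exp, neg_neg, smul_smul, ← exp_add,
    sub_eq_add_neg]

end Substitution

-- `integral_gumbelMeasure` needs no finiteness, and `μ.real univ = ∫ 1 ∂μ = 1` rules out
-- `μ univ = ∞`.
instance isProbabilityMeasure_gumbelMeasure : IsProbabilityMeasure gumbelMeasure := by
  rw [isProbabilityMeasure_iff_real, ← mul_one (gumbelMeasure.real univ), ← smul_eq_mul,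
    ← integral_const, integral_gumbelMeasure]
  simpa using integral_exp_neg_Ioi_zero

theorem integral_log_mul_exp_neg_Ioi :
    ∫ t in Ioi 0, log t * exp (-t) = -eulerMascheroniConstant := by
  have hGamma : Complex.Gamma =ᶠ[nhds 1] Complex.GammaIntegral := by
    filter_upwards [(isOpen_lt continuous_const Complex.continuous_re).mem_nhds
      (by norm_num : (0 : ℝ) < (1 : ℂ).re)] with s hs
    exact Complex.Gamma_eq_integral hs
  have h := (Complex.hasDerivAt_Gamma_one.congr_of_eventuallyEq hGamma.symm).unique
    (Complex.hasDerivAt_GammaIntegral (s := 1) one_pos)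
  simp only [sub_self, Complex.cpow_zero, one_mul] at h
  rw [← Complex.ofReal_inj, ← integral_complex_ofReal]
  simpa only [Complex.ofReal_mul, Complex.ofReal_neg] using h.symm

theorem integral_id_gumbelMeasure : ∫ x, x ∂gumbelMeasure = eulerMascheroniConstant := by
  rw [integral_gumbelMeasure]
  simp_rw [smul_eq_mul, mul_neg, mul_comm (exp _), integral_neg, integral_log_mul_exp_neg_Ioi,
    neg_neg]

theorem gumbel_isProbability_and_mean_eq_eulerMascheroni :
    IsProbabilityMeasure gumbelMeasure ∧
      (∫ x, x ∂gumbelMeasure) = Real.eulerMascheroniConstant :=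
  ⟨isProbabilityMeasure_gumbelMeasure, integral_id_gumbelMeasure⟩
end

section
/- Let D be a finite nonempty set, v : D → ℝ, and let μ be the standard Gumbel measure on ℝ. For each d ∈ D, the probability under the product Gumbel measure that alternative d attains the maximum is the multinomial-logit probability: (⊗_{d'∈D} μ){ε : D → ℝ | ∀ d' ∈ D, v(d) + ε(d) ≥ v(d') + ε(d')} = exp(v(d)) / Σ_{d' ∈ D} exp(v(d')). -/
/-!
Condition on the shock `x = ε d`. Alternative `d` then wins iff `ε d' ≤ x + (v d - v d')` for every
`d' ≠ d`, and by independence this has probability `∏ exp (-exp (-x) * exp (v d' - v d))`.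
Since the Gumbel density is `exp (-x)` times the Gumbel CDF at `x`, which is the missing factor
`d' = d`, the integrand becomes `exp (-x - K * exp (-x))` with `K = ∑ exp (v d' - v d)`. The
substitution `u = -exp (-x)` turns its integral into `∫_{u < 0} exp (K * u) du = 1 / K`.
-/

open MeasureTheory

open Real Set

theorem image_neg_exp_neg_Iic (t : ℝ) : (fun x => -exp (-x)) '' Iic t = Iic (-exp (-t)) := by
  change (Neg.neg ∘ exp ∘ Neg.neg) '' Iic t = _
  rw [image_comp, image_comp, image_neg_Iic, image_exp_Ici, image_neg_Ici]

theorem range_neg_exp_neg : range (fun x => -exp (-x)) = Iio 0 := by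
  change range (Neg.neg ∘ exp ∘ Neg.neg) = _
  rw [range_comp, range_comp, neg_surjective.range_eq, image_univ, range_exp, image_neg_Ioi, neg_zero]

theorem setLIntegral_exp_neg_sub_mul_exp_neg_eq_image (K : ℝ) {s : Set ℝ} (hs : MeasurableSet s) :
    ∫⁻ x in s, ENNReal.ofReal (exp (-x - K * exp (-x))) =
      ∫⁻ u in (fun x => -exp (-x)) '' s, ENNReal.ofReal (exp (K * u)) := by
  have hderiv : ∀ x, HasDerivAt (fun x => -exp (-x)) (exp (-x)) x := fun x => by
    simpa using ((hasDerivAt_neg x).exp).fun_neg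
  have hmono : Monotone fun x : ℝ => -exp (-x) := fun x y hxy => by
    simpa using exp_le_exp.2 (neg_le_neg hxy)
  rw [lintegral_image_eq_lintegral_deriv_mul_of_monotoneOn hs
    (fun x _ => (hderiv x).hasDerivWithinAt) (hmono.monotoneOn s)]
  refine setLIntegral_congr_fun hs fun x _ => ?_
  rw [← ENNReal.ofReal_mul (exp_pos _).le, ← exp_add]
  ring_nf

theorem lintegral_exp_mul_Iic {K : ℝ} (hK : 0 < K) (c : ℝ) :
    ∫⁻ u in Iic c, ENNReal.ofReal (exp (K * u)) = ENNReal.ofReal (exp (K * c) / K) := by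
  rw [← ofReal_integral_eq_lintegral_ofReal (integrableOn_exp_mul_Iic hK c)
    (ae_of_all _ fun _ => (exp_pos _).le), integral_exp_mul_Iic hK]

theorem setLIntegral_Iic_exp_neg_sub_mul_exp_neg {K : ℝ} (hK : 0 < K) (t : ℝ) :
    ∫⁻ x in Iic t, ENNReal.ofReal (exp (-x - K * exp (-x))) =
      ENNReal.ofReal (exp (-(K * exp (-t))) / K) := by
  rw [setLIntegral_exp_neg_sub_mul_exp_neg_eq_image K measurableSet_Iic, image_neg_exp_neg_Iic,
    lintegral_exp_mul_Iic hK, mul_neg]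

theorem lintegral_exp_neg_sub_mul_exp_neg {K : ℝ} (hK : 0 < K) :
    ∫⁻ x, ENNReal.ofReal (exp (-x - K * exp (-x))) = ENNReal.ofReal (1 / K) := by
  rw [← setLIntegral_univ, setLIntegral_exp_neg_sub_mul_exp_neg_eq_image K MeasurableSet.univ, image_univ,
    range_neg_exp_neg, setLIntegral_congr Iio_ae_eq_Iic, lintegral_exp_mul_Iic hK, mul_zero, exp_zero]

theorem gumbelMeasure_Iic (t : ℝ) :
    gumbelMeasure (Iic t) = ENNReal.ofReal (exp (-exp (-t))) := by
  rw [gumbelMeasure, withDensity_apply _ measurableSet_Iic]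
  simpa using setLIntegral_Iic_exp_neg_sub_mul_exp_neg one_pos t

instance : IsProbabilityMeasure gumbelMeasure where
  measure_univ := by
    rw [gumbelMeasure, withDensity_apply _ MeasurableSet.univ, Measure.restrict_univ]
    simpa using lintegral_exp_neg_sub_mul_exp_neg one_pos

theorem measure_pi_setOf_forall_ne_le {ι : Type*} [Fintype ι] [DecidableEq ι]
    (μ : ι → Measure ℝ) [∀ j, IsProbabilityMeasure (μ j)] (i : ι) {f : ι → ℝ → ℝ}
    (hf : ∀ j, Measurable (f j)) :
    Measure.pi μ {x | ∀ j ≠ i, x j ≤ f j (x i)} =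
      ∫⁻ a, ∏ j ∈ Finset.univ.erase i, μ j (Iic (f j a)) ∂μ i := by
  set S := {x : ι → ℝ | ∀ j ≠ i, x j ≤ f j (x i)}
  have hS : MeasurableSet S := by
    simp only [S, ofPred_forall]
    exact .iInter fun j => .iInter fun _ =>
      measurableSet_le (measurable_pi_apply j) ((hf j).comp (measurable_pi_apply i))
  let e := MeasurableEquiv.piEquivPiSubtypeProd (fun _ : ι => ℝ) (· = i)
  have hslice (a : {j // j = i} → ℝ) :
      Prod.mk a ⁻¹' (e.symm ⁻¹' S) = univ.pi fun j : {j // ¬j = i} => Iic (f j (a ⟨i, rfl⟩)) := by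
    ext b
    simp only [mem_preimage, mem_univ_pi, mem_Iic, S, mem_ofPred_eq, Subtype.forall]
    refine forall_congr' fun j => forall_congr' fun hj => ?_
    change (if h : j = i then a ⟨j, h⟩ else b ⟨j, h⟩) ≤
      f j (if h : i = i then a ⟨i, h⟩ else b ⟨i, h⟩) ↔ _
    rw [dif_neg hj, dif_pos rfl]
  rw [← ((measurePreserving_piEquivPiSubtypeProd μ (· = i)).symm e).measure_preimage_equiv S,
    Measure.prod_apply (hS.preimage e.symm.measurable)]
  simp_rw [hslice, Measure.pi_pi]
  have hmeas : Measurable fun a => ∏ j ∈ Finset.univ.erase i, μ j (Iic (f j a)) :=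
    Finset.measurable_prod _ fun j _ =>
      (Monotone.measurable fun _ _ h => measure_mono (Iic_subset_Iic.2 h)).comp (hf j)
  rw [← (measurePreserving_eval (fun j : {j // j = i} => μ j) ⟨i, rfl⟩).lintegral_comp hmeas]
  -- `congr!` also identifies the two `Fintype` instances on `{j // j = i}` that arise here.
  congr! 2 with a
  exact (Finset.prod_subtype _ (by simp) fun j => μ j (Iic (f j _))).symm

theorem lintegral_prod_gumbelMeasure_Iic_add {ι : Type*} [Fintype ι] [DecidableEq ι] (c : ι → ℝ)
    {i : ι} (hi : c i = 0) :
    ∫⁻ x, ∏ j ∈ Finset.univ.erase i, gumbelMeasure (Iic (x + c j)) ∂gumbelMeasure =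
      ENNReal.ofReal (1 / ∑ j, exp (-c j)) := by
  set K := ∑ j, exp (-c j)
  have hK : 0 < K := Finset.sum_pos (fun j _ => exp_pos _) ⟨i, Finset.mem_univ i⟩
  have hexp (x : ℝ) (j : ι) : exp (-(x + c j)) = exp (-c j) * exp (-x) := by
    rw [← exp_add]; ring_nf
  have hdensity (x : ℝ) : ENNReal.ofReal (exp (-x - exp (-x))) *
      ∏ j ∈ Finset.univ.erase i, ENNReal.ofReal (exp (-exp (-(x + c j)))) =
      ENNReal.ofReal (exp (-x - K * exp (-x))) := by
    rw [← ENNReal.ofReal_prod_of_nonneg (fun _ _ => (exp_pos _).le),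
      ← ENNReal.ofReal_mul (exp_pos _).le, ← exp_sum, ← exp_add, Finset.sum_mul,
      ← Finset.add_sum_erase _ _ (Finset.mem_univ i), hi, neg_zero, exp_zero, one_mul]
    simp only [hexp, Finset.sum_neg_distrib]
    ring_nf
  simp_rw [gumbelMeasure_Iic]
  rw [gumbelMeasure, lintegral_withDensity_eq_lintegral_mul _ (by fun_prop) (by fun_prop)]
  simp only [Pi.mul_apply, hdensity]
  exact lintegral_exp_neg_sub_mul_exp_neg hK

theorem gumbel_argmax_prob_eq_logit_general {D : Type*} [Fintype D]
    (v : D → ℝ) (d : D) :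
    (Measure.pi fun _ : D => gumbelMeasure)
        {ε : D → ℝ | ∀ d' : D, v d + ε d ≥ v d' + ε d'}
      = ENNReal.ofReal (Real.exp (v d) / ∑ d' : D, Real.exp (v d')) := by
  classical
  have hset : {ε : D → ℝ | ∀ d' : D, v d + ε d ≥ v d' + ε d'} =
      {ε | ∀ j ≠ d, ε j ≤ ε d + (v d - v j)} := by
    ext ε
    refine forall_congr' fun j => ⟨fun h _ => by linarith, fun h => ?_⟩
    rcases eq_or_ne j d with rfl | hj
    · exact le_rfl
    · linarith [h hj]
  rw [hset, measure_pi_setOf_forall_ne_le _ d (f := fun j a => a + (v d - v j))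
      fun j => measurable_add_const _,
    lintegral_prod_gumbelMeasure_Iic_add (fun j => v d - v j) (sub_self _)]
  simp_rw [neg_sub, exp_sub, ← Finset.sum_div, one_div_div]

/-- Under i.i.d. standard Gumbel shocks, the probability that alternative `d`
attains the maximum of `v d' + ε d'` is the multinomial-logit probability. -/
theorem gumbel_argmax_prob_eq_logit {D : Type*} [Fintype D] [Nonempty D]
    (v : D → ℝ) (d : D) :
    (Measure.pi fun _ : D => gumbelMeasure)
        {ε : D → ℝ | ∀ d' : D, v d + ε d ≥ v d' + ε d'}
      = ENNReal.ofReal (Real.exp (v d) / ∑ d' : D, Real.exp (v d')) :=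
  gumbel_argmax_prob_eq_logit_general v d
end

section
/- (One-period-forward representation of choice-specific values, equation (6).) Let Z be a finite nonempty set and D a finite nonempty set, β ∈ ℝ, and let V : Z → ℝ, v : Z × D → ℝ, u : Z × D → ℝ, ψ : D × Z → ℝ, f : Z × D → Z → ℝ satisfy, for all z ∈ Z and d ∈ D: (i) V(z) = ψ(d, z) + v(z, d), and (ii) v(z, d) = u(z, d) + β Σ_{z'} V(z') f(z' | z, d). Let w : Z × D → ℝ satisfy Σ_{d'} w(z₁, d') = 1 for every z₁. Define ū^w(z₁) = Σ_{d'} w(z₁, d') u(z₁, d'), ψ̄^w(z₁) = Σ_{d'} w(z₁, d') ψ(d', z₁), and f̄^w(z₂ | z₁) = Σ_{d'} w(z₁, d') f(z₂ | z₁, d'). Then for all z ∈ Z, d ∈ D: v(z, d) = u(z, d) + β Σ_{z₁} [ū^w(z₁) + ψ̄^w(z₁)] f(z₁ | z, d) + β² Σ_{z₂} V(z₂) Σ_{z₁} f̄^w(z₂ | z₁) f(z₁ | z, d). -/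
/-!
Averaging the Arcidiacono–Miller identity `V = ψ(d, ·) + v(·, d)` over actions with weights `w`
and inserting the Bellman equation gives a Bellman-type recursion for `V` itself,
`V = ū^w + ψ̄^w + β f̄^w V`. Substituting this recursion for `V` once into the Bellman equation
for `v(z, d)` and exchanging the order of summation yields the representation.
-/

open Finset

section

variable {Z D : Type*} [Fintype Z] [Fintype D]

theorem eq_sum_weight_mul_of_sum_eq_one {w a : D → ℝ} {c : ℝ} (hw : ∑ d, w d = 1)
    (hc : ∀ d, c = a d) : c = ∑ d, w d * a d := by
  calc c = ∑ d, w d * c := by rw [← sum_mul, hw, one_mul]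
    _ = ∑ d, w d * a d := sum_congr rfl fun d _ => by rw [hc d]

theorem sum_sum_mul_comm (V : Z → ℝ) (P : Z → Z → ℝ) (q : Z → ℝ) :
    ∑ z₁, (∑ z₂, V z₂ * P z₁ z₂) * q z₁ = ∑ z₂, V z₂ * ∑ z₁, P z₁ z₂ * q z₁ := by
  simp only [sum_mul, mul_sum]
  rw [sum_comm]
  exact sum_congr rfl fun _ _ => sum_congr rfl fun _ _ => by ring

theorem integrated_value_eq_weighted_bellman (β : ℝ) (V : Z → ℝ) (v u : Z → D → ℝ)
    (ψ : D → Z → ℝ) (f : Z → D → Z → ℝ) (hAM : ∀ z d, V z = ψ d z + v z d)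
    (hBellman : ∀ z d, v z d = u z d + β * ∑ z' : Z, V z' * f z d z') (w : Z → D → ℝ)
    (z : Z) (hw : ∑ d, w z d = 1) :
    V z = ∑ d, w z d * u z d + ∑ d, w z d * ψ d z
      + β * ∑ z', V z' * ∑ d, w z d * f z d z' := by
  have hmix : V z = ∑ d, w z d * (ψ d z + (u z d + β * ∑ z', V z' * f z d z')) :=
    eq_sum_weight_mul_of_sum_eq_one hw fun d => by rw [← hBellman, ← hAM]
  have hcont : ∑ d, w z d * (β * ∑ z', V z' * f z d z')
      = β * ∑ z', V z' * ∑ d, w z d * f z d z' := by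
    simp only [mul_sum]
    rw [sum_comm]
    exact sum_congr rfl fun _ _ => sum_congr rfl fun _ _ => by ring
  rw [hmix, ← hcont]
  simp only [mul_add, sum_add_distrib]
  ring

end

theorem one_period_forward_representation_general
    {Z D : Type*} [Fintype Z] [Fintype D]
    (β : ℝ) (V : Z → ℝ) (v : Z → D → ℝ) (u : Z → D → ℝ) (ψ : D → Z → ℝ)
    (f : Z → D → Z → ℝ)
    (hAM : ∀ z d, V z = ψ d z + v z d)
    (hBellman : ∀ z d, v z d = u z d + β * ∑ z' : Z, V z' * f z d z')
    (w : Z → D → ℝ) (hw : ∀ z₁, ∑ d' : D, w z₁ d' = 1)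
    (ubar : Z → ℝ) (hubar : ∀ z₁, ubar z₁ = ∑ d' : D, w z₁ d' * u z₁ d')
    (ψbar : Z → ℝ) (hψbar : ∀ z₁, ψbar z₁ = ∑ d' : D, w z₁ d' * ψ d' z₁)
    (fbar : Z → Z → ℝ) (hfbar : ∀ z₁ z₂, fbar z₁ z₂ = ∑ d' : D, w z₁ d' * f z₁ d' z₂) :
    ∀ (z : Z) (d : D),
      v z d = u z d
        + β * (∑ z₁ : Z, (ubar z₁ + ψbar z₁) * f z d z₁)
        + β ^ 2 * (∑ z₂ : Z, V z₂ * ∑ z₁ : Z, fbar z₁ z₂ * f z d z₁) := by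
  have hV : ∀ z₁, V z₁ = ubar z₁ + ψbar z₁ + β * ∑ z₂, V z₂ * fbar z₁ z₂ := fun z₁ => by
    simp only [hubar, hψbar, hfbar]
    exact integrated_value_eq_weighted_bellman β V v u ψ f hAM hBellman w z₁ (hw z₁)
  intro z d
  calc v z d
        = u z d + β * ∑ z₁, (ubar z₁ + ψbar z₁ + β * ∑ z₂, V z₂ * fbar z₁ z₂) * f z d z₁ := by
        rw [hBellman]
        congr 2
        exact sum_congr rfl fun z₁ _ => by rw [← hV]
    _ = _ := by
        simp only [add_mul, sum_add_distrib, mul_assoc, ← mul_sum]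
        rw [sum_sum_mul_comm]
        ring

/-- One-period-forward representation of choice-specific values (equation (6)):
substituting the `w`-weighted value identity into the Bellman recursion expresses
`v z d` via one-period-ahead weighted payoffs and ψ-corrections plus a two-period
continuation term with the `w`-weighted forward transition. -/
theorem one_period_forward_representation
    {Z D : Type*} [Fintype Z] [Fintype D] [Nonempty Z] [Nonempty D]
    (β : ℝ) (V : Z → ℝ) (v : Z → D → ℝ) (u : Z → D → ℝ) (ψ : D → Z → ℝ)
    (f : Z → D → Z → ℝ)
    (hAM : ∀ z d, V z = ψ d z + v z d)
    (hBellman : ∀ z d, v z d = u z d + β * ∑ z' : Z, V z' * f z d z')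
    (w : Z → D → ℝ) (hw : ∀ z₁, ∑ d' : D, w z₁ d' = 1)
    (ubar : Z → ℝ) (hubar : ∀ z₁, ubar z₁ = ∑ d' : D, w z₁ d' * u z₁ d')
    (ψbar : Z → ℝ) (hψbar : ∀ z₁, ψbar z₁ = ∑ d' : D, w z₁ d' * ψ d' z₁)
    (fbar : Z → Z → ℝ) (hfbar : ∀ z₁ z₂, fbar z₁ z₂ = ∑ d' : D, w z₁ d' * f z₁ d' z₂) :
    ∀ (z : Z) (d : D),
      v z d = u z d
        + β * (∑ z₁ : Z, (ubar z₁ + ψbar z₁) * f z d z₁)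
        + β ^ 2 * (∑ z₂ : Z, V z₂ * ∑ z₁ : Z, fbar z₁ z₂ * f z d z₁) :=
  one_period_forward_representation_general β V v u ψ f hAM hBellman w hw ubar hubar ψbar hψbar fbar
    hfbar
end

section
/- (Value differences under 1-period finite dependence, equation (8).) Let Z be a finite nonempty set and D a finite nonempty set with a distinguished baseline action 0, β ∈ ℝ, and let V : Z → ℝ, v : Z × D → ℝ, u : Z × D → ℝ, ψ : D × Z → ℝ, f : Z × D → Z → ℝ satisfy, for all z, d: (i) V(z) = ψ(d, z) + v(z, d), and (ii) v(z, d) = u(z, d) + β Σ_{z'} V(z') f(z' | z, d). Let w : Z × D → ℝ have Σ_{d'} w(z₁, d') = 1 for every z₁, and define ū^w, ψ̄^w, f̄^w as the w-weighted averages of u, ψ, f over actions. Write f̃(z₁ | z, d) = f(z₁ | z, d) − f(z₁ | z, 0) and ũ(z, d) = u(z, d) − u(z, 0). If the 1-period dependence condition Σ_{z₁} f̄^w(z₂ | z₁) f̃(z₁ | z, d) = 0 holds for all z, z₂ ∈ Z and d ∈ D, then for all z, d: v(z, d) − v(z, 0) = ũ(z, d) + β Σ_{z₁} [ū^w(z₁)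 + ψ̄^w(z₁)] f̃(z₁ | z, d); in particular the value differences do not involve V. -/
/-!
Averaging the identities `V = ψ(d, ·) + v(·, d)` over `d` with the weights `w` and inserting the
Bellman equation gives `V = ū^w + ψ̄^w + β f̄^w V`. Pairing this with the transition difference
`f̃(· | z, d)` removes the continuation term, since `f̃` lies in the left null space of `f̄^w`;
what remains is `Σ V f̃ = Σ (ū^w + ψ̄^w) f̃`, which is the only place `V` enters `v(z, d) − v(z, 0)`.
-/

open Finset

theorem sum_mul_eq_of_eq_add_mul_sum_of_sum_mul_eq_zero {ι : Type*} [Fintype ι] {β : ℝ}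
    {V g δ : ι → ℝ} {P : ι → ι → ℝ} (hV : ∀ i, V i = g i + β * ∑ j, V j * P i j)
    (hδ : ∀ j, ∑ i, P i j * δ i = 0) :
    ∑ i, V i * δ i = ∑ i, g i * δ i := by
  calc ∑ i, V i * δ i = ∑ i, (g i * δ i + β * ∑ j, V j * P i j * δ i) :=
        sum_congr rfl fun i _ => by rw [hV i, add_mul, mul_assoc, sum_mul]
    _ = ∑ i, g i * δ i + β * ∑ j, V j * ∑ i, P i j * δ i := by
        simp_rw [sum_add_distrib, ← mul_sum, mul_sum, mul_assoc]
        rw [sum_comm]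
    _ = ∑ i, g i * δ i := by simp only [hδ, mul_zero, sum_const_zero, add_zero]

theorem eq_sum_mul_add_mul_sum_of_bellman {D Z : Type*} [Fintype D] [Fintype Z] {β V₀ : ℝ}
    {V : Z → ℝ} {w v u ψ : D → ℝ} {f : D → Z → ℝ} (hw : ∑ d, w d = 1)
    (hAM : ∀ d, V₀ = ψ d + v d) (hBellman : ∀ d, v d = u d + β * ∑ z, V z * f d z) :
    V₀ = ∑ d, w d * u d + ∑ d, w d * ψ d + β * ∑ z, V z * ∑ d, w d * f d z := by
  calc V₀ = ∑ d, w d * V₀ := by rw [← sum_mul, hw, one_mul]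
    _ = ∑ d, (w d * u d + w d * ψ d + β * ∑ z, w d * (V z * f d z)) := by
        refine sum_congr rfl fun d _ => ?_
        rw [hAM d, hBellman d, ← mul_sum]
        ring
    _ = _ := by
        rw [sum_add_distrib, sum_add_distrib, ← mul_sum, sum_comm]
        simp_rw [mul_left_comm _ (V _), ← mul_sum]

theorem value_differences_one_period_finite_dependence_general
    {Z D : Type*} [Fintype Z] [Fintype D]
    (d₀ : D) (β : ℝ) (V : Z → ℝ) (v : Z → D → ℝ) (u : Z → D → ℝ) (ψ : D → Z → ℝ)
    (f : Z → D → Z → ℝ)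
    (hAM : ∀ z d, V z = ψ d z + v z d)
    (hBellman : ∀ z d, v z d = u z d + β * ∑ z' : Z, V z' * f z d z')
    (w : Z → D → ℝ) (hw : ∀ z₁, ∑ d' : D, w z₁ d' = 1)
    (ubar : Z → ℝ) (hubar : ∀ z₁, ubar z₁ = ∑ d' : D, w z₁ d' * u z₁ d')
    (ψbar : Z → ℝ) (hψbar : ∀ z₁, ψbar z₁ = ∑ d' : D, w z₁ d' * ψ d' z₁)
    (fbar : Z → Z → ℝ) (hfbar : ∀ z₁ z₂, fbar z₁ z₂ = ∑ d' : D, w z₁ d' * f z₁ d' z₂)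
    (hdep : ∀ (z : Z) (z₂ : Z) (d : D),
      ∑ z₁ : Z, fbar z₁ z₂ * (f z d z₁ - f z d₀ z₁) = 0) :
    ∀ (z : Z) (d : D),
      v z d - v z d₀ = (u z d - u z d₀)
        + β * ∑ z₁ : Z, (ubar z₁ + ψbar z₁) * (f z d z₁ - f z d₀ z₁) := by
  intro z d
  have hV : ∀ z₁, V z₁ = ubar z₁ + ψbar z₁ + β * ∑ z₂, V z₂ * fbar z₁ z₂ := fun z₁ => by
    simp_rw [hubar, hψbar, hfbar]
    exact eq_sum_mul_add_mul_sum_of_bellman (hw z₁) (hAM z₁) (hBellman z₁)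
  rw [← sum_mul_eq_of_eq_add_mul_sum_of_sum_mul_eq_zero hV (hdep z · d), hBellman z d,
    hBellman z d₀]
  simp only [mul_sub, sum_sub_distrib]
  ring

/-- Value differences under 1-period finite dependence (equation (8)): if the
`w`-weighted forward transition kills the one-step transition differences
relative to the baseline action `d₀`, then value differences between any action
and the baseline are expressed using only one-period-ahead weighted payoffs and
ψ-corrections; in particular they do not involve the integrated value `V`. -/
theorem value_differences_one_period_finite_dependence
    {Z D : Type*} [Fintype Z] [Fintype D] [Nonempty Z] [Nonempty D]
    (d₀ : D) (β : ℝ) (V : Z → ℝ) (v : Z → D → ℝ) (u : Z → D → ℝ) (ψ : D → Z → ℝ)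
    (f : Z → D → Z → ℝ)
    (hAM : ∀ z d, V z = ψ d z + v z d)
    (hBellman : ∀ z d, v z d = u z d + β * ∑ z' : Z, V z' * f z d z')
    (w : Z → D → ℝ) (hw : ∀ z₁, ∑ d' : D, w z₁ d' = 1)
    (ubar : Z → ℝ) (hubar : ∀ z₁, ubar z₁ = ∑ d' : D, w z₁ d' * u z₁ d')
    (ψbar : Z → ℝ) (hψbar : ∀ z₁, ψbar z₁ = ∑ d' : D, w z₁ d' * ψ d' z₁)
    (fbar : Z → Z → ℝ) (hfbar : ∀ z₁ z₂, fbar z₁ z₂ = ∑ d' : D, w z₁ d' * f z₁ d' z₂)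
    (hdep : ∀ (z : Z) (z₂ : Z) (d : D),
      ∑ z₁ : Z, fbar z₁ z₂ * (f z d z₁ - f z d₀ z₁) = 0) :
    ∀ (z : Z) (d : D),
      v z d - v z d₀ = (u z d - u z d₀)
        + β * ∑ z₁ : Z, (ubar z₁ + ψbar z₁) * (f z d z₁ - f z d₀ z₁) :=
  value_differences_one_period_finite_dependence_general d₀ β V v u ψ f hAM hBellman w hw ubar hubar
    ψbar hψbar fbar hfbar hdep
end

section
/- (Exact ρ-period expansion with remainder.) Let Z and D be finite nonempty sets, β ∈ ℝ, ρ ≥ 1, and let u_τ : Z × D → ℝ, f_τ : Z × D → Z → ℝ, V_τ : Z → ℝ, v_τ : Z × D → ℝ, ψ_τ : D × Z → ℝ (τ = 0, 1, …, ρ+1) satisfy, for all τ ≤ ρ, z, d: (i) V_τ(z) = ψ_τ(d, z) + v_τ(z, d) and (ii) v_τ(z, d) = u_τ(z, d) + β Σ_{z'} V_{τ+1}(z') f_τ(z' | z, d). For each τ = 1, …, ρ fix weights w_τ : Z × D × Z × D → ℝ (depending on the initial pair (z, d) and the current state z') with Σ_{d'} w_τ(z, d, z', d') = 1, and define recursively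 κ_0(z' | z, d) = f_0(z' | z, d) and κ_τ(z'' | z, d) = Σ_{z'} κ_{τ−1}(z' | z, d) Σ_{d'} w_τ(z, d, z', d') f_τ(z'' | z', d'). Then for all z ∈ Z and d ∈ D: v_0(z, d) = u_0(z, d) + Σ_{τ=1}^{ρ} β^τ Σ_{z'} [ Σ_{d'} w_τ(z, d, z', d') ( u_τ(z', d') + ψ_τ(d', z') ) ] κ_{τ−1}(z' | z, d) + β^{ρ+1} Σ_{z''} V_{ρ+1}(z'') κ_ρ(z'' | z, d). -/
/-- The weighted `τ`-step-forward transition densities `κ_τ(z' | z, d)` built from the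
period-`τ` transition kernels `f` and decision weights `w` (which may depend on the
initial state–action pair `(z, d)` and the current state): `κ_0 = f_0` and
`κ_τ(z'' | z, d) = Σ_{z'} κ_{τ-1}(z' | z, d) Σ_{d'} w_τ(z, d, z', d') f_τ(z'' | z', d')`. -/
noncomputable def kappaW {Z D : Type*} [Fintype Z] [Fintype D]
    (f : ℕ → Z → D → Z → ℝ) (w : ℕ → Z → D → Z → D → ℝ) :
    ℕ → Z → D → Z → ℝ
  | 0 => fun z d z' => f 0 z d z'
  | (τ + 1) => fun z d z'' =>
      ∑ z' : Z, kappaW f w τ z d z' * ∑ d' : D, w (τ + 1) z d z' d' * f (τ + 1) z' d' z''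

/-- Exact ρ-period expansion with remainder: iterating the weighted value identity
forward ρ periods expresses the period-0 choice-specific value as flow payoffs and
ψ-corrections weighted by the forward densities `κ`, plus a `β^(ρ+1)`-discounted
remainder involving the period-(ρ+1) integrated value function. -/
theorem rho_period_expansion_with_remainder
    {Z D : Type*} [Fintype Z] [Fintype D] [Nonempty Z] [Nonempty D]
    (β : ℝ) (ρ : ℕ) (hρ : 1 ≤ ρ)
    (u : ℕ → Z → D → ℝ) (f : ℕ → Z → D → Z → ℝ)
    (V : ℕ → Z → ℝ) (v : ℕ → Z → D → ℝ) (ψ : ℕ → D → Z → ℝ)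
    (hAM : ∀ τ ≤ ρ, ∀ (z : Z) (d : D), V τ z = ψ τ d z + v τ z d)
    (hBellman : ∀ τ ≤ ρ, ∀ (z : Z) (d : D),
      v τ z d = u τ z d + β * ∑ z' : Z, V (τ + 1) z' * f τ z d z')
    (w : ℕ → Z → D → Z → D → ℝ)
    (hw : ∀ τ, 1 ≤ τ → τ ≤ ρ → ∀ (z : Z) (d : D) (z' : Z),
      ∑ d' : D, w τ z d z' d' = 1) :
    ∀ (z : Z) (d : D),
      v 0 z d = u 0 z d
        + (∑ τ ∈ Finset.range ρ, β ^ (τ + 1) *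
            ∑ z' : Z,
              (∑ d' : D, w (τ + 1) z d z' d' *
                (u (τ + 1) z' d' + ψ (τ + 1) d' z')) * kappaW f w τ z d z')
        + β ^ (ρ + 1) * ∑ z'' : Z, V (ρ + 1) z'' * kappaW f w ρ z d z'' := by
  have key : ∀ n, n + 1 ≤ ρ → ∀ (z : Z) (d : D),
      ∑ z'' : Z, V (n+1) z'' * kappaW f w n z d z''
        = (∑ z' : Z, (∑ d' : D, w (n+1) z d z' d' *
              (u (n+1) z' d' + ψ (n+1) d' z')) * kappaW f w n z d z')
          + β * ∑ z'' : Z, V (n+2) z'' * kappaW f w (n+1) z d z'' := by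
    intro n hn z d
    have hV : ∀ z' : Z, V (n+1) z' * kappaW f w n z d z'
        = (∑ d' : D, w (n+1) z d z' d' * (u (n+1) z' d' + ψ (n+1) d' z')) * kappaW f w n z d z'
          + kappaW f w n z d z' *
            ∑ d' : D, w (n+1) z d z' d' * (β * ∑ z'' : Z, V (n+2) z'' * f (n+1) z' d' z'') := by
      intro z'
      have h1 : V (n+1) z' = ∑ d' : D, w (n+1) z d z' d' * V (n+1) z' := by
        rw [← Finset.sum_mul, hw (n+1) (by omega) hn z d z', one_mul]
      have h2 : ∀ d' : D, w (n+1) z d z' d' * V (n+1) z'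
          = w (n+1) z d z' d' * (u (n+1) z' d' + ψ (n+1) d' z')
            + w (n+1) z d z' d' * (β * ∑ z'' : Z, V (n+2) z'' * f (n+1) z' d' z'') := by
        intro d'
        rw [hAM (n+1) hn z' d', hBellman (n+1) hn z' d']
        ring
      calc V (n+1) z' * kappaW f w n z d z'
          = (∑ d' : D, w (n+1) z d z' d' * V (n+1) z') * kappaW f w n z d z' := by rw [← h1]
        _ = ((∑ d' : D, w (n+1) z d z' d' * (u (n+1) z' d' + ψ (n+1) d' z'))
              + ∑ d' : D, w (n+1) z d z' d' * (β * ∑ z'' : Z, V (n+2) z'' * f (n+1) z' d' z''))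
              * kappaW f w n z d z' := by
            rw [← Finset.sum_add_distrib]
            congr 1
            exact Finset.sum_congr rfl fun d' _ => h2 d'
        _ = _ := by ring
    have hswap : β * ∑ z'' : Z, V (n+2) z'' * kappaW f w (n+1) z d z''
        = ∑ z' : Z, kappaW f w n z d z' *
            ∑ d' : D, w (n+1) z d z' d' * (β * ∑ z'' : Z, V (n+2) z'' * f (n+1) z' d' z'') := by
      show β * ∑ z'' : Z, V (n+2) z'' *
          (∑ z' : Z, kappaW f w n z d z' * ∑ d' : D, w (n+1) z d z' d' * f (n+1) z' d' z'') = _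
      simp only [Finset.mul_sum]
      rw [Finset.sum_comm]
      refine Finset.sum_congr rfl fun z' _ => ?_
      rw [Finset.sum_comm]
      exact Finset.sum_congr rfl fun d' _ =>
        Finset.sum_congr rfl fun z'' _ => by ring
    rw [hswap, ← Finset.sum_add_distrib]
    exact Finset.sum_congr rfl fun z' _ => hV z'
  have main : ∀ n, n ≤ ρ → ∀ (z : Z) (d : D),
      v 0 z d = u 0 z d
        + (∑ τ ∈ Finset.range n, β ^ (τ + 1) *
            ∑ z' : Z, (∑ d' : D, w (τ + 1) z d z' d' *
              (u (τ + 1) z' d' + ψ (τ + 1) d' z')) * kappaW f w τ z d z')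
        + β ^ (n + 1) * ∑ z'' : Z, V (n + 1) z'' * kappaW f w n z d z'' := by
    intro n
    induction n with
    | zero => intro _ z d; simpa [kappaW, pow_one] using hBellman 0 (by omega) z d
    | succ n ih =>
      intro hn z d
      rw [ih (by omega) z d, key n hn z d, Finset.sum_range_succ]
      ring
  exact main ρ le_rfl
end
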